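/- arXiv:1412.4457 — 5 statements merged into one kernel-verified Lean document; each statement's English description precedes it below -/
import Mathlib

section
/- Let S ⊆ ℝ be a Borel set and let z, w ∈ ℂ with Im z > 0 and Im w > 0. Then |θ(S,z) − θ(S,w)| ≤ (π/2)·|z−w|·(1/Im z + 1/Im w). -/
open MeasureTheory Real Complex Set

/-- The angle subtended by a Borel set `S ⊆ ℝ` at a point `z` in the upper
half-plane: `θ(S,z) = ∫_S Im (1/(t - z)) dt`. -/
noncomputable def subtendedAngle (S : Set ℝ) (z : ℂ) : ℝ :=
  ∫ t in S, ((1 : ℂ) / ((t : ℂ) - z)).im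

/-! Pointwise, `|Im (1/(t-z)) - Im (1/(t-w))| ≤ |1/(t-z) - 1/(t-w)| = |z-w| / (|t-z| |t-w|)`,
and AM–GM bounds this by `|z-w|/2 · (|t-z|⁻² + |t-w|⁻²)`. Integrating over all of `ℝ` instead
of `S` and using the Poisson integral `∫ |t-z|⁻² dt = π / Im z` gives the bound. -/

theorem norm_inv_sub_inv_le {K : Type*} [NormedDivisionRing K] {a b : K} (ha : a ≠ 0)
    (hb : b ≠ 0) : ‖a⁻¹ - b⁻¹‖ ≤ ‖a - b‖ / 2 * (‖a‖⁻¹ ^ 2 + ‖b‖⁻¹ ^ 2) := by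
  have amgm : 2 * ‖a‖⁻¹ * ‖b‖⁻¹ ≤ ‖a‖⁻¹ ^ 2 + ‖b‖⁻¹ ^ 2 := two_mul_le_add_sq _ _
  calc ‖a⁻¹ - b⁻¹‖ = ‖a - b‖ * (‖a‖⁻¹ * ‖b‖⁻¹) := by
        rw [inv_sub_inv' ha hb, norm_mul, norm_mul, norm_inv, norm_inv, norm_sub_rev]; ring
    _ ≤ ‖a - b‖ / 2 * (‖a‖⁻¹ ^ 2 + ‖b‖⁻¹ ^ 2) := by nlinarith [norm_nonneg (a - b)]

namespace Complex

variable {z w : ℂ}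

theorem ofReal_sub_ne_zero (hz : z.im ≠ 0) (t : ℝ) : (t : ℂ) - z ≠ 0 := fun h =>
  hz (by simpa using congrArg im h)

theorem im_one_div_ofReal_sub (t : ℝ) (z : ℂ) :
    ((1 : ℂ) / ((t : ℂ) - z)).im = z.im * ‖(t : ℂ) - z‖⁻¹ ^ 2 := by
  simp [inv_im, div_eq_mul_inv, normSq_eq_norm_sq]

theorem inv_norm_ofReal_sub_sq_eq (hz : z.im ≠ 0) (t : ℝ) :
    ‖(t : ℂ) - z‖⁻¹ ^ 2 = (z.im ^ 2)⁻¹ * (1 + ((t - z.re) / z.im) ^ 2)⁻¹ := by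
  rw [inv_pow, ← normSq_eq_norm_sq]
  simp only [normSq_apply, sub_re, sub_im, ofReal_re, ofReal_im]
  field_simp
  ring

theorem integrable_inv_norm_ofReal_sub_sq (hz : z.im ≠ 0) :
    Integrable fun t : ℝ => ‖(t : ℂ) - z‖⁻¹ ^ 2 := by
  simp_rw [inv_norm_ofReal_sub_sq_eq hz]
  exact ((integrable_inv_one_add_sq.comp_div hz).comp_sub_right z.re).const_mul _

theorem integral_inv_norm_ofReal_sub_sq (hz : z.im ≠ 0) :
    ∫ t : ℝ, ‖(t : ℂ) - z‖⁻¹ ^ 2 = π / |z.im| := by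
  simp_rw [inv_norm_ofReal_sub_sq_eq hz]
  rw [integral_const_mul, integral_sub_right_eq_self (fun t : ℝ => (1 + (t / z.im) ^ 2)⁻¹),
    Measure.integral_comp_div (fun t : ℝ => (1 + t ^ 2)⁻¹), integral_univ_inv_one_add_sq,
    smul_eq_mul, ← sq_abs]
  field_simp

theorem integrable_im_one_div_ofReal_sub (hz : z.im ≠ 0) :
    Integrable fun t : ℝ => ((1 : ℂ) / ((t : ℂ) - z)).im := by
  simp_rw [im_one_div_ofReal_sub]
  exact (integrable_inv_norm_ofReal_sub_sq hz).const_mul _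

theorem abs_im_one_div_ofReal_sub_sub_le (hz : z.im ≠ 0) (hw : w.im ≠ 0) (t : ℝ) :
    |((1 : ℂ) / ((t : ℂ) - z)).im - ((1 : ℂ) / ((t : ℂ) - w)).im| ≤
      ‖z - w‖ / 2 * (‖(t : ℂ) - z‖⁻¹ ^ 2 + ‖(t : ℂ) - w‖⁻¹ ^ 2) := by
  rw [← sub_im, one_div, one_div]
  calc _ ≤ ‖((t : ℂ) - z)⁻¹ - ((t : ℂ) - w)⁻¹‖ := abs_im_le_norm _
    _ ≤ _ := by
      convert norm_inv_sub_inv_le (ofReal_sub_ne_zero hz t) (ofReal_sub_ne_zero hw t) using 2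
      rw [sub_sub_sub_cancel_left, norm_sub_rev]

end Complex

theorem abs_subtendedAngle_sub_le_general (S : Set ℝ)
    (z w : ℂ) (hz : 0 < z.im) (hw : 0 < w.im) :
    |subtendedAngle S z - subtendedAngle S w| ≤
      (π / 2) * ‖z - w‖ * (1 / z.im + 1 / w.im) := by
  set K : ℂ → ℝ → ℝ := fun c t => ‖(t : ℂ) - c‖⁻¹ ^ 2
  have hK : Integrable fun t => ‖z - w‖ / 2 * (K z t + K w t) :=
    ((integrable_inv_norm_ofReal_sub_sq hz.ne').add
      (integrable_inv_norm_ofReal_sub_sq hw.ne')).const_mul _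
  calc |subtendedAngle S z - subtendedAngle S w|
      = |∫ t in S, (((1 : ℂ) / ((t : ℂ) - z)).im - ((1 : ℂ) / ((t : ℂ) - w)).im)| := by
        rw [subtendedAngle, subtendedAngle, integral_sub
          (integrable_im_one_div_ofReal_sub hz.ne').integrableOn
          (integrable_im_one_div_ofReal_sub hw.ne').integrableOn]
    _ ≤ ∫ t in S, |((1 : ℂ) / ((t : ℂ) - z)).im - ((1 : ℂ) / ((t : ℂ) - w)).im| :=
        abs_integral_le_integral_abs
    _ ≤ ∫ t in S, ‖z - w‖ / 2 * (K z t + K w t) :=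
        integral_mono_of_nonneg (.of_forall fun _ => abs_nonneg _) hK.integrableOn
          (.of_forall (abs_im_one_div_ofReal_sub_sub_le hz.ne' hw.ne'))
    _ ≤ ∫ t, ‖z - w‖ / 2 * (K z t + K w t) :=
        setIntegral_le_integral hK (.of_forall fun _ => by positivity)
    _ = (π / 2) * ‖z - w‖ * (1 / z.im + 1 / w.im) := by
        rw [integral_const_mul, integral_add (integrable_inv_norm_ofReal_sub_sq hz.ne')
          (integrable_inv_norm_ofReal_sub_sq hw.ne'), integral_inv_norm_ofReal_sub_sq hz.ne',
          integral_inv_norm_ofReal_sub_sq hw.ne', abs_of_pos hz, abs_of_pos hw]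
        ring

theorem abs_subtendedAngle_sub_le (S : Set ℝ) (hS : MeasurableSet S)
    (z w : ℂ) (hz : 0 < z.im) (hw : 0 < w.im) :
    |subtendedAngle S z - subtendedAngle S w| ≤
      (π / 2) * ‖z - w‖ * (1 / z.im + 1 / w.im) :=
  abs_subtendedAngle_sub_le_general S z w hz hw
end

section
/- Let S ⊆ ℝ be a Borel set and x ∈ ℝ. If x is a Lebesgue density point of S (i.e. μ(S ∩ (x−h, x+h))/(2h) → 1 as h → 0⁺, where μ is Lebesgue measure), then θ(S, x+iε) → π as ε → 0⁺. If x is a Lebesgue density point of ℝ∖S, then θ(S, x+iε) → 0 as ε → 0⁺. -/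
open MeasureTheory Real Complex Set Filter

/-- `x` is a Lebesgue density point of `S`:
`μ(S ∩ (x-h, x+h)) / (2h) → 1` as `h → 0⁺`. -/
def IsLebesgueDensityPoint (S : Set ℝ) (x : ℝ) : Prop :=
  Tendsto (fun h : ℝ => (volume (S ∩ Set.Ioo (x - h) (x + h))).toReal / (2 * h))
    (nhdsWithin 0 (Set.Ioi 0)) (nhds 1)

/-!
Up to the factor `π`, `θ(S, x + iε)` is the mass that the Cauchy distribution with location `x`
and scale `ε` gives to `S`, so `θ(S, z) + θ(Sᶜ, z) = π`, and it suffices to show that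
`θ(S, x + iε) → 0` when `S` has density `0` at `x`. Writing the kernel `ε / (r² + ε²)` as
`∫_{r}^∞ 2εs / (s² + ε²)² ds` and exchanging the integrals gives
`θ(S, x + iε) = ∫_0^∞ 2εr / (r² + ε²)² · |S ∩ (x - r, x + r)| dr`. Density `0` bounds the
measure by `2δr` for `r ≤ b`, which contributes at most `4πδ`, and the trivial bound `2r` for
`r > b` contributes at most `4ε / b`.
-/

open ProbabilityTheory Topology
open scoped ENNReal

/-- `π` times the Poisson kernel of the upper half-plane at `x + iε`. -/
noncomputable def angleDensity (x ε t : ℝ) : ℝ := ε / ((t - x) ^ 2 + ε ^ 2)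

@[fun_prop]
lemma measurable_angleDensity (x ε : ℝ) : Measurable (angleDensity x ε) := by
  unfold angleDensity; fun_prop

lemma angleDensity_nonneg (x : ℝ) {ε : ℝ} (hε : 0 ≤ ε) (t : ℝ) : 0 ≤ angleDensity x ε t := by
  unfold angleDensity; positivity

lemma im_one_div_sub (x ε t : ℝ) :
    ((1 : ℂ) / ((t : ℂ) - ((x : ℂ) + ε * I))).im = angleDensity x ε t := by
  rw [one_div, Complex.inv_im, Complex.normSq_apply, angleDensity]
  simp only [Complex.sub_re, Complex.sub_im, Complex.add_re, Complex.add_im, Complex.ofReal_re,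
    Complex.ofReal_im, Complex.mul_re, Complex.mul_im, Complex.I_re, Complex.I_im]
  ring

lemma subtendedAngle_eq_setIntegral (S : Set ℝ) (x ε : ℝ) :
    subtendedAngle S ((x : ℂ) + ε * I) = ∫ t in S, angleDensity x ε t := by
  simp only [subtendedAngle, im_one_div_sub]

lemma angleDensity_eq_pi_mul_cauchyPDFReal (x : ℝ) {ε : ℝ} (hε : 0 ≤ ε) (t : ℝ) :
    angleDensity x ε t = π * cauchyPDFReal x ε.toNNReal t := by
  rw [angleDensity, cauchyPDFReal_def, Real.coe_toNNReal _ hε]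
  field_simp

lemma integrable_angleDensity (x : ℝ) {ε : ℝ} (hε : 0 ≤ ε) : Integrable (angleDensity x ε) := by
  rw [funext (angleDensity_eq_pi_mul_cauchyPDFReal x hε)]
  exact (integrable_cauchyPDFReal x).const_mul π

lemma integral_angleDensity (x : ℝ) {ε : ℝ} (hε : 0 < ε) : ∫ t, angleDensity x ε t = π := by
  simp only [angleDensity_eq_pi_mul_cauchyPDFReal x hε.le, integral_const_mul,
    integral_cauchyPDFReal_eq_one x (Real.toNNReal_pos.2 hε).ne', mul_one]

lemma subtendedAngle_add_subtendedAngle_compl {S : Set ℝ} (hS : MeasurableSet S) (x : ℝ)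
    {ε : ℝ} (hε : 0 < ε) :
    subtendedAngle S ((x : ℂ) + ε * I) + subtendedAngle Sᶜ ((x : ℂ) + ε * I) = π := by
  rw [subtendedAngle_eq_setIntegral, subtendedAngle_eq_setIntegral,
    integral_add_compl hS (integrable_angleDensity x hε.le), integral_angleDensity x hε]

theorem setLIntegral_lintegral_Ioi_dist {X : Type*} [PseudoMetricSpace X] [MeasurableSpace X]
    [OpensMeasurableSpace X] (μ : Measure X) [SFinite μ] (S : Set X) (x : X) {w : ℝ → ℝ≥0∞}
    (hw : Measurable w) :
    ∫⁻ t in S, (∫⁻ r in Ioi (dist t x), w r) ∂μ = ∫⁻ r, w r * μ (S ∩ Metric.ball x r) := by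
  set F : X × ℝ → ℝ≥0∞ := {p | dist p.1 x < p.2}.indicator fun p => w p.2
  have hF : Measurable F := (hw.comp measurable_snd).indicator <|
    measurableSet_lt ((continuous_id.dist continuous_const).measurable.comp measurable_fst)
      measurable_snd
  calc ∫⁻ t in S, (∫⁻ r in Ioi (dist t x), w r) ∂μ = ∫⁻ t in S, (∫⁻ r, F (t, r)) ∂μ := by
        simp only [← lintegral_indicator measurableSet_Ioi, F, indicator_apply, mem_Ioi,
          mem_ofPred_eq]
    _ = ∫⁻ r, ∫⁻ t in S, F (t, r) ∂μ := lintegral_lintegral_swap hF.aemeasurable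
    _ = ∫⁻ r, w r * μ (S ∩ Metric.ball x r) := by
        congr with r
        have hball : ∀ t, F (t, r) = (Metric.ball x r).indicator (fun _ => w r) t :=
          fun _ => rfl
        simp only [hball]
        rw [lintegral_indicator_const measurableSet_ball, Measure.restrict_apply measurableSet_ball,
          inter_comm]

lemma hasDerivAt_neg_div_sq_add_sq {ε : ℝ} (hε : ε ≠ 0) (r : ℝ) :
    HasDerivAt (fun r => -ε / (r ^ 2 + ε ^ 2)) (2 * ε * r / (r ^ 2 + ε ^ 2) ^ 2) r := by
  have hpos : r ^ 2 + ε ^ 2 ≠ 0 := by positivity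
  refine ((hasDerivAt_const r (-ε)).fun_div ((hasDerivAt_pow 2 r).add_const (ε ^ 2))
    hpos).congr_deriv ?_
  ring

lemma ofReal_angleDensity_eq_lintegral (x : ℝ) {ε : ℝ} (hε : 0 < ε) (t : ℝ) :
    ENNReal.ofReal (angleDensity x ε t) =
      ∫⁻ r in Ioi (dist t x), ENNReal.ofReal (2 * ε * r / (r ^ 2 + ε ^ 2) ^ 2) := by
  have hcont : ContinuousWithinAt (fun r : ℝ => -ε / (r ^ 2 + ε ^ 2)) (Ici (dist t x))
      (dist t x) :=
    (by fun_prop (disch := intro; positivity) :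
      Continuous fun r : ℝ => -ε / (r ^ 2 + ε ^ 2)).continuousWithinAt
  have hderiv : ∀ r ∈ Ioi (dist t x), HasDerivAt (fun r => -ε / (r ^ 2 + ε ^ 2)) _ r :=
    fun r _ => hasDerivAt_neg_div_sq_add_sq hε.ne' r
  have hnonneg : ∀ r ∈ Ioi (dist t x), 0 ≤ 2 * ε * r / (r ^ 2 + ε ^ 2) ^ 2 := fun r hr => by
    have : 0 ≤ r := dist_nonneg.trans hr.le
    positivity
  have hlim : Tendsto (fun r : ℝ => -ε / (r ^ 2 + ε ^ 2)) atTop (𝓝 0) :=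
    tendsto_const_nhds.div_atTop
      (tendsto_atTop_add_const_right _ _ (tendsto_pow_atTop two_ne_zero))
  rw [← ofReal_integral_eq_lintegral_ofReal
    (integrableOn_Ioi_deriv_of_nonneg hcont hderiv hnonneg hlim)
    ((ae_restrict_iff' measurableSet_Ioi).2 (ae_of_all _ hnonneg)),
    integral_Ioi_of_hasDerivAt_of_nonneg hcont hderiv hnonneg hlim, angleDensity, Real.dist_eq,
    sq_abs, zero_sub, neg_div, neg_neg]

lemma lintegral_Ioi_ofReal_div_sq {c b : ℝ} (hc : 0 ≤ c) (hb : 0 < b) :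
    ∫⁻ r in Ioi b, ENNReal.ofReal (c / r ^ 2) = ENNReal.ofReal (c / b) := by
  have hrpow : ∀ r ∈ Ioi b, c / r ^ 2 = c * r ^ (-2 : ℝ) := fun r hr => by
    rw [Real.rpow_neg (hb.trans hr).le, Real.rpow_two, div_eq_mul_inv]
  have hint : IntegrableOn (fun r : ℝ => c * r ^ (-2 : ℝ)) (Ioi b) :=
    (integrableOn_Ioi_rpow_of_lt (by norm_num) hb).const_mul c
  rw [setLIntegral_congr_fun measurableSet_Ioi (fun r hr => by rw [hrpow r hr]),
    ← ofReal_integral_eq_lintegral_ofReal hint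
      ((ae_restrict_iff' measurableSet_Ioi).2 (ae_of_all _ fun r hr => by
        have := hb.trans hr; positivity)),
    integral_const_mul, integral_Ioi_rpow_of_lt (by norm_num) hb]
  norm_num [Real.rpow_neg_one, div_eq_mul_inv]

section DensityZero

variable {S : Set ℝ} {x δ b ε : ℝ}

lemma ofReal_mul_volume_inter_ball_le (hε : 0 < ε) (hδ : 0 ≤ δ)
    (hS : ∀ r ∈ Ioc 0 b, volume (S ∩ Ioo (x - r) (x + r)) ≤ ENNReal.ofReal (δ * (2 * r)))
    (r : ℝ) :
    ENNReal.ofReal (2 * ε * r / (r ^ 2 + ε ^ 2) ^ 2) * volume (S ∩ Metric.ball x r) ≤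
      ENNReal.ofReal (δ * (4 * angleDensity 0 ε r)) +
        (Ioi b).indicator (fun r => ENNReal.ofReal (4 * ε / r ^ 2)) r := by
  rw [Real.ball_eq_Ioo]
  rcases le_or_gt r 0 with hr | hr
  · rw [Ioo_eq_empty (by linarith), inter_empty, measure_empty, mul_zero]
    exact zero_le
  have hpos : 0 < r ^ 2 + ε ^ 2 := by positivity
  rcases le_or_gt r b with hrb | hrb
  · calc ENNReal.ofReal (2 * ε * r / (r ^ 2 + ε ^ 2) ^ 2) * volume (S ∩ Ioo (x - r) (x + r))
        ≤ ENNReal.ofReal (2 * ε * r / (r ^ 2 + ε ^ 2) ^ 2) * ENNReal.ofReal (δ * (2 * r)) :=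
          mul_le_mul_right (hS r ⟨hr, hrb⟩) _
      _ ≤ ENNReal.ofReal (δ * (4 * angleDensity 0 ε r)) := by
          rw [← ENNReal.ofReal_mul (by positivity)]
          refine ENNReal.ofReal_le_ofReal ?_
          rw [angleDensity, sub_zero, div_mul_eq_mul_div, div_le_iff₀ (by positivity)]
          field_simp
          nlinarith [sq_nonneg ε, mul_nonneg hδ hε.le]
      _ ≤ _ := le_self_add
  · calc ENNReal.ofReal (2 * ε * r / (r ^ 2 + ε ^ 2) ^ 2) * volume (S ∩ Ioo (x - r) (x + r))
        ≤ ENNReal.ofReal (2 * ε * r / (r ^ 2 + ε ^ 2) ^ 2) * ENNReal.ofReal (2 * r) := by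
          refine mul_le_mul_right ((measure_mono inter_subset_right).trans_eq ?_) _
          rw [Real.volume_Ioo]
          ring_nf
      _ ≤ ENNReal.ofReal (4 * ε / r ^ 2) := by
          rw [← ENNReal.ofReal_mul (by positivity)]
          refine ENNReal.ofReal_le_ofReal ?_
          rw [div_mul_eq_mul_div, div_le_div_iff₀ (by positivity) (by positivity)]
          nlinarith [mul_nonneg hε.le (sq_nonneg (r * ε)), mul_nonneg hε.le (sq_nonneg (ε * ε))]
      _ = (Ioi b).indicator (fun r => ENNReal.ofReal (4 * ε / r ^ 2)) r :=
          (indicator_of_mem (show r ∈ Ioi b from hrb)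
            (fun r => ENNReal.ofReal (4 * ε / r ^ 2))).symm
      _ ≤ _ := le_add_self

lemma lintegral_angleDensity_le (hε : 0 < ε) (hδ : 0 ≤ δ) (hb : 0 < b)
    (hS : ∀ r ∈ Ioc 0 b, volume (S ∩ Ioo (x - r) (x + r)) ≤ ENNReal.ofReal (δ * (2 * r))) :
    ∫⁻ t in S, ENNReal.ofReal (angleDensity x ε t) ≤ ENNReal.ofReal (4 * π * δ + 4 * ε / b) := by
  simp only [ofReal_angleDensity_eq_lintegral x hε]
  rw [setLIntegral_lintegral_Ioi_dist volume S x (by fun_prop)]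
  calc ∫⁻ r, ENNReal.ofReal (2 * ε * r / (r ^ 2 + ε ^ 2) ^ 2) * volume (S ∩ Metric.ball x r)
      ≤ ∫⁻ r, ENNReal.ofReal (δ * (4 * angleDensity 0 ε r)) +
          (Ioi b).indicator (fun r => ENNReal.ofReal (4 * ε / r ^ 2)) r :=
        lintegral_mono (ofReal_mul_volume_inter_ball_le hε hδ hS)
    _ = ENNReal.ofReal (4 * π * δ) + ENNReal.ofReal (4 * ε / b) := by
        rw [lintegral_add_left (by fun_prop), lintegral_indicator measurableSet_Ioi,
          lintegral_Ioi_ofReal_div_sq (by positivity) hb,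
          ← ofReal_integral_eq_lintegral_ofReal
            ((integrable_angleDensity 0 hε.le).const_mul _ |>.const_mul _)
            (ae_of_all _ fun r => by have := angleDensity_nonneg 0 hε.le r; positivity),
          integral_const_mul, integral_const_mul, integral_angleDensity 0 hε]
        ring_nf
    _ = ENNReal.ofReal (4 * π * δ + 4 * ε / b) :=
        (ENNReal.ofReal_add (by positivity) (by positivity)).symm

lemma tendsto_setIntegral_angleDensity_zero
    (hS : Tendsto (fun r : ℝ => (volume (S ∩ Ioo (x - r) (x + r))).toReal / (2 * r))
      (𝓝[>] 0) (𝓝 0)) :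
    Tendsto (fun ε => ∫ t in S, angleDensity x ε t) (𝓝[>] 0) (𝓝 0) := by
  refine tendsto_order.2 ⟨fun a ha => ?_, fun c hc => ?_⟩
  · filter_upwards [self_mem_nhdsWithin] with ε (hε : 0 < ε)
    exact ha.trans_le (integral_nonneg (angleDensity_nonneg x hε.le))
  set δ := c / (8 * π) with hδ_def
  have hδ : 0 < δ := by positivity
  obtain ⟨b, hb : 0 < b, hbδ⟩ := mem_nhdsGT_iff_exists_Ioc_subset.1 (hS (Iio_mem_nhds hδ))
  have hvol : ∀ r ∈ Ioc 0 b, volume (S ∩ Ioo (x - r) (x + r)) ≤ ENNReal.ofReal (δ * (2 * r)) :=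
    fun r hr => by
      have hfin : volume (S ∩ Ioo (x - r) (x + r)) ≠ ∞ :=
        measure_ne_top_of_subset inter_subset_right measure_Ioo_lt_top.ne
      rw [← ENNReal.ofReal_toReal hfin]
      exact ENNReal.ofReal_le_ofReal ((div_lt_iff₀ (by linarith [hr.1])).1 (hbδ hr)).le
  filter_upwards [Ioo_mem_nhdsGT (by positivity : (0 : ℝ) < c * b / 8)] with ε ⟨hε, hεb⟩
  calc ∫ t in S, angleDensity x ε t
      = (∫⁻ t in S, ENNReal.ofReal (angleDensity x ε t)).toReal :=
        integral_eq_lintegral_of_nonneg_ae (ae_of_all _ (angleDensity_nonneg x hε.le))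
          (measurable_angleDensity x ε).aestronglyMeasurable
    _ ≤ 4 * π * δ + 4 * ε / b :=
        ENNReal.toReal_le_of_le_ofReal (by positivity)
          (lintegral_angleDensity_le hε hδ.le hb hvol)
    _ < c := by
        have : 4 * ε / b < c / 2 := by rw [div_lt_iff₀ hb]; linarith
        have : 4 * π * δ = c / 2 := by rw [hδ_def]; field_simp; ring
        linarith

end DensityZero

lemma IsLebesgueDensityPoint.tendsto_compl {S : Set ℝ} {x : ℝ} (hS : MeasurableSet S)
    (h : IsLebesgueDensityPoint S x) :
    Tendsto (fun r : ℝ => (volume (Sᶜ ∩ Ioo (x - r) (x + r))).toReal / (2 * r))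
      (𝓝[>] 0) (𝓝 0) := by
  refine (sub_self (1 : ℝ) ▸ tendsto_const_nhds.sub h).congr' ?_
  filter_upwards [self_mem_nhdsWithin] with r (hr : 0 < r)
  have hsum := measureReal_inter_add_sdiff (μ := volume) (s := Ioo (x - r) (x + r)) hS
    measure_Ioo_lt_top.ne
  rw [volume_real_Ioo_of_le (by linarith), sdiff_eq, inter_comm, inter_comm _ Sᶜ] at hsum
  simp only [measureReal_def] at hsum
  field_simp
  linarith

lemma tendsto_subtendedAngle_zero {S : Set ℝ} {x : ℝ} (hS : MeasurableSet S)
    (h : IsLebesgueDensityPoint Sᶜ x) :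
    Tendsto (fun ε : ℝ => subtendedAngle S ((x : ℂ) + ε * I)) (𝓝[>] 0) (𝓝 0) := by
  simp only [subtendedAngle_eq_setIntegral]
  exact tendsto_setIntegral_angleDensity_zero (compl_compl S ▸ h.tendsto_compl hS.compl)

theorem subtendedAngle_tendsto_of_densityPoint (S : Set ℝ) (hS : MeasurableSet S)
    (x : ℝ) :
    (IsLebesgueDensityPoint S x →
      Tendsto (fun ε : ℝ => subtendedAngle S ((x : ℂ) + ε * Complex.I))
        (nhdsWithin 0 (Set.Ioi 0)) (nhds π)) ∧
    (IsLebesgueDensityPoint Sᶜ x →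
      Tendsto (fun ε : ℝ => subtendedAngle S ((x : ℂ) + ε * Complex.I))
        (nhdsWithin 0 (Set.Ioi 0)) (nhds 0)) := by
  refine ⟨fun h => ?_, tendsto_subtendedAngle_zero hS⟩
  have hcompl := tendsto_subtendedAngle_zero hS.compl (x := x) (by rwa [compl_compl])
  refine (sub_zero π ▸ tendsto_const_nhds.sub hcompl).congr' ?_
  filter_upwards [self_mem_nhdsWithin] with ε hε
  rw [← subtendedAngle_add_subtendedAngle_compl hS x hε, add_sub_cancel_right]
end

section
/- Let a < b be real numbers, q : [a,b] → ℝ continuous, and z ∈ ℂ with Im z > 0. Suppose y : [a,b] → ℂ is twice continuously differentiable and satisfies −y''(x) + q(x)y(x) = z·y(x) for all x ∈ [a,b], together with y(a) = 1 and y(b) = 0. Then Im(y'(a)) = (Im z) · ∫_a^b |y(x)|² dx, and in particular Im(y'(a)) > 0. Consequently, the truncated Titchmarsh–Weyl value m_b(z) = y'(a) has positive imaginary part. -/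
/-!
Since `q` is real, a solution of `-y'' + q y = z y` satisfies the Lagrange identity
`(Im (conj y * y'))' = Im (|y'|² + (q - z) |y|²) = -(Im z) |y|²`. Integrating over `[a, b]` and
using `y a = 1`, `y b = 0` gives `Im (y' a) = Im z * ∫ |y|²`, and the integral is positive because
`|y|²` is continuous, nonnegative and equal to `1` at `a`.
-/

open MeasureTheory Real Complex Set intervalIntegral

theorem integral_eq_sub_of_hasDerivWithinAt_Icc {E : Type*} [NormedAddCommGroup E]
    [NormedSpace ℝ E] [CompleteSpace E] {f f' : ℝ → E} {a b : ℝ} (hab : a ≤ b)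
    (hderiv : ∀ x ∈ Icc a b, HasDerivWithinAt f (f' x) (Icc a b) x)
    (hint : IntervalIntegrable f' volume a b) :
    ∫ x in a..b, f' x = f b - f a :=
  integral_eq_sub_of_hasDerivAt_of_le hab (fun x hx => (hderiv x hx).continuousWithinAt)
    (fun x hx => (hderiv x (Ioo_subset_Icc_self hx)).hasDerivAt (Icc_mem_nhds hx.1 hx.2)) hint

theorem hasDerivWithinAt_im_star_mul_of_schrodinger {y y' : ℝ → ℂ} {s : Set ℝ} {x q : ℝ}
    {z w : ℂ} (hy : HasDerivWithinAt y (y' x) s x) (hy' : HasDerivWithinAt y' w s x)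
    (hode : -w + q * y x = z * y x) :
    HasDerivWithinAt (fun t => (star (y t) * y' t).im) (-z.im * ‖y x‖ ^ 2) s x := by
  have hw : w = q * y x - z * y x := by linear_combination -hode
  refine (imCLM.hasFDerivAt.comp_hasDerivWithinAt x (hy.star.mul hy')).congr_deriv ?_
  simp only [hw, imCLM_apply, add_im, mul_im, sub_re, sub_im, mul_re, star_def, conj_re,
    conj_im, ofReal_re, ofReal_im, Complex.sq_norm, normSq_apply]
  ring

theorem im_deriv_at_left_endpoint_pos_general (a b : ℝ) (hab : a < b)
    (q : ℝ → ℝ)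
    (z : ℂ) (hz : 0 < z.im)
    (y y' y'' : ℝ → ℂ)
    (hy' : ∀ x ∈ Set.Icc a b, HasDerivWithinAt y (y' x) (Set.Icc a b) x)
    (hy'' : ∀ x ∈ Set.Icc a b, HasDerivWithinAt y' (y'' x) (Set.Icc a b) x)
    (hode : ∀ x ∈ Set.Icc a b, -y'' x + (q x : ℂ) * y x = z * y x)
    (hya : y a = 1) (hyb : y b = 0) :
    (y' a).im = z.im * ∫ x in a..b, ‖y x‖ ^ 2 ∧
    0 < (y' a).im := by
  have hnormSq : ContinuousOn (fun x => ‖y x‖ ^ 2) (Icc a b) :=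
    (continuous_norm.comp_continuousOn fun x hx => (hy' x hx).continuousWithinAt).pow 2
  have hgreen : ∫ x in a..b, -z.im * ‖y x‖ ^ 2 =
      (star (y b) * y' b).im - (star (y a) * y' a).im :=
    integral_eq_sub_of_hasDerivWithinAt_Icc hab.le
      (fun x hx => hasDerivWithinAt_im_star_mul_of_schrodinger (hy' x hx) (hy'' x hx) (hode x hx))
      ((hnormSq.intervalIntegrable_of_Icc hab.le).const_mul _)
  have hident : (y' a).im = z.im * ∫ x in a..b, ‖y x‖ ^ 2 := by
    simp only [intervalIntegral.integral_const_mul, hya, hyb, star_zero, zero_mul, zero_im, star_one, one_mul]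
      at hgreen
    linarith
  have hpos : 0 < ∫ x in a..b, ‖y x‖ ^ 2 :=
    integral_pos hab hnormSq (fun x _ => by positivity) ⟨a, left_mem_Icc.mpr hab.le, by simp [hya]⟩
  exact ⟨hident, hident ▸ mul_pos hz hpos⟩

theorem im_deriv_at_left_endpoint_pos (a b : ℝ) (hab : a < b)
    (q : ℝ → ℝ) (hq : ContinuousOn q (Set.Icc a b))
    (z : ℂ) (hz : 0 < z.im)
    (y y' y'' : ℝ → ℂ)
    (hy' : ∀ x ∈ Set.Icc a b, HasDerivWithinAt y (y' x) (Set.Icc a b) x)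
    (hy'' : ∀ x ∈ Set.Icc a b, HasDerivWithinAt y' (y'' x) (Set.Icc a b) x)
    (hy''cont : ContinuousOn y'' (Set.Icc a b))
    (hode : ∀ x ∈ Set.Icc a b, -y'' x + (q x : ℂ) * y x = z * y x)
    (hya : y a = 1) (hyb : y b = 0) :
    (y' a).im = z.im * ∫ x in a..b, ‖y x‖ ^ 2 ∧
    0 < (y' a).im :=
  im_deriv_at_left_endpoint_pos_general a b hab q z hz y y' y'' hy' hy'' hode hya hyb
end

section
/- Let q : [a,∞) → ℝ be continuous, λ ∈ ℝ, and let u, v be the solutions of −y'' + q(x)y = λy with u(a)=1, u'(a)=0, v(a)=0, v'(a)=1. Given real numbers a₁,b₁,c₁ and a₂,b₂,c₂, define for i = 1,2: Pᵢ := aᵢ(u')² + bᵢu'v' + cᵢ(v')², Qᵢ := −2aᵢuu' − bᵢ(u'v + uv') − 2cᵢvv', Rᵢ := aᵢu² + bᵢuv + cᵢv². Then for every x ∈ [a,∞), 2(P₁R₂ + P₂R₁) − Q₁Q₂ = 2(a₁c₂ + a₂c₁) − b₁b₂. In particular, 4P₁R₁ − Q₁² = 4a₁c₁ − b₁² for all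 x. -/
/-!
The Wronskian `u v' - u' v` of two solutions of `y'' = (q - λ) y` is constant, hence equal to `1`.
Substituting `(s, t) ↦ (s u + t u', s v + t v')` into `a s² + b s t + c t²` gives the binary form
`R s² - Q s t + P t²`, and `2 (P R̃ + P̃ R) - Q Q̃` is the polarized discriminant of such forms.
A linear substitution multiplies the polarized discriminant by the square of its determinant,
which here is the Wronskian.
-/

open Set

theorem Convex.eq_of_forall_hasDerivWithinAt_zero {s : Set ℝ} {f : ℝ → ℝ} (hs : Convex ℝ s)
    (hf : ∀ x ∈ s, HasDerivWithinAt f 0 s x) {x y : ℝ} (hx : x ∈ s) (hy : y ∈ s) :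
    f x = f y := by
  have h := hs.norm_image_sub_le_of_norm_hasDerivWithin_le hf (fun _ _ => norm_zero.le) hx hy
  rw [zero_mul, norm_le_zero_iff, sub_eq_zero] at h
  exact h.symm

section Wronskian

variable {s : Set ℝ} {r u u' u'' v v' v'' : ℝ → ℝ}
  (hu' : ∀ x ∈ s, HasDerivWithinAt u (u' x) s x) (hu'' : ∀ x ∈ s, HasDerivWithinAt u' (u'' x) s x)
  (hv' : ∀ x ∈ s, HasDerivWithinAt v (v' x) s x) (hv'' : ∀ x ∈ s, HasDerivWithinAt v' (v'' x) s x)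
  (hu : ∀ x ∈ s, u'' x = r x * u x) (hv : ∀ x ∈ s, v'' x = r x * v x)
include hu' hu'' hv' hv'' hu hv

theorem hasDerivWithinAt_wronskian_zero {x : ℝ} (hx : x ∈ s) :
    HasDerivWithinAt (fun y => u y * v' y - u' y * v y) 0 s x := by
  refine (((hu' x hx).mul (hv'' x hx)).sub ((hu'' x hx).mul (hv' x hx))).congr_deriv ?_
  rw [hu x hx, hv x hx]
  ring

theorem wronskian_eq_of_convex (hs : Convex ℝ s) {x₀ x : ℝ} (hx₀ : x₀ ∈ s) (hx : x ∈ s) :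
    u x * v' x - u' x * v x = u x₀ * v' x₀ - u' x₀ * v x₀ :=
  hs.eq_of_forall_hasDerivWithinAt_zero
    (fun _ hy => hasDerivWithinAt_wronskian_zero hu' hu'' hv' hv'' hu hv hy) hx hx₀

end Wronskian

theorem appell_inner_eq_wronskian_sq_mul (u u' v v' a₁ b₁ c₁ a₂ b₂ c₂ : ℝ) :
    2 * ((a₁ * u' ^ 2 + b₁ * (u' * v') + c₁ * v' ^ 2) * (a₂ * u ^ 2 + b₂ * (u * v) + c₂ * v ^ 2)
        + (a₂ * u' ^ 2 + b₂ * (u' * v') + c₂ * v' ^ 2) * (a₁ * u ^ 2 + b₁ * (u * v) + c₁ * v ^ 2))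
      - (-2 * a₁ * (u * u') - b₁ * (u' * v + u * v') - 2 * c₁ * (v * v'))
        * (-2 * a₂ * (u * u') - b₂ * (u' * v + u * v') - 2 * c₂ * (v * v'))
      = (u * v' - u' * v) ^ 2 * (2 * (a₁ * c₂ + a₂ * c₁) - b₁ * b₂) := by
  ring

theorem appell_inner_product_of_quadratic_forms_general (a : ℝ) (q : ℝ → ℝ)
    (lam : ℝ)
    (u u' u'' v v' v'' : ℝ → ℝ)
    (hu' : ∀ x ∈ Set.Ici a, HasDerivWithinAt u (u' x) (Set.Ici a) x)
    (hu'' : ∀ x ∈ Set.Ici a, HasDerivWithinAt u' (u'' x) (Set.Ici a) x)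
    (hv' : ∀ x ∈ Set.Ici a, HasDerivWithinAt v (v' x) (Set.Ici a) x)
    (hv'' : ∀ x ∈ Set.Ici a, HasDerivWithinAt v' (v'' x) (Set.Ici a) x)
    (hodeu : ∀ x ∈ Set.Ici a, -u'' x + q x * u x = lam * u x)
    (hodev : ∀ x ∈ Set.Ici a, -v'' x + q x * v x = lam * v x)
    (hua : u a = 1) (hu'a : u' a = 0) (hva : v a = 0) (hv'a : v' a = 1)
    (a₁ b₁ c₁ a₂ b₂ c₂ : ℝ)
    (P₁ Q₁ R₁ P₂ Q₂ R₂ : ℝ → ℝ)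
    (hP₁ : P₁ = fun x => a₁ * u' x ^ 2 + b₁ * (u' x * v' x) + c₁ * v' x ^ 2)
    (hQ₁ : Q₁ = fun x =>
      -2 * a₁ * (u x * u' x) - b₁ * (u' x * v x + u x * v' x) - 2 * c₁ * (v x * v' x))
    (hR₁ : R₁ = fun x => a₁ * u x ^ 2 + b₁ * (u x * v x) + c₁ * v x ^ 2)
    (hP₂ : P₂ = fun x => a₂ * u' x ^ 2 + b₂ * (u' x * v' x) + c₂ * v' x ^ 2)
    (hQ₂ : Q₂ = fun x =>
      -2 * a₂ * (u x * u' x) - b₂ * (u' x * v x + u x * v' x) - 2 * c₂ * (v x * v' x))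
    (hR₂ : R₂ = fun x => a₂ * u x ^ 2 + b₂ * (u x * v x) + c₂ * v x ^ 2) :
    ∀ x ∈ Set.Ici a,
      2 * (P₁ x * R₂ x + P₂ x * R₁ x) - Q₁ x * Q₂ x = 2 * (a₁ * c₂ + a₂ * c₁) - b₁ * b₂ ∧
      4 * (P₁ x * R₁ x) - Q₁ x ^ 2 = 4 * (a₁ * c₁) - b₁ ^ 2 := by
  intro x hx
  have hW : u x * v' x - u' x * v x = 1 := by
    rw [wronskian_eq_of_convex hu' hu'' hv' hv'' (r := fun y => q y - lam)
      (fun y hy => by linarith [hodeu y hy]) (fun y hy => by linarith [hodev y hy])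
      (convex_Ici a) self_mem_Ici hx, hua, hu'a, hva, hv'a]
    ring
  subst hP₁ hQ₁ hR₁ hP₂ hQ₂ hR₂
  constructor
  · simpa only [hW, one_pow, one_mul] using
      appell_inner_eq_wronskian_sq_mul (u x) (u' x) (v x) (v' x) a₁ b₁ c₁ a₂ b₂ c₂
  · linear_combination appell_inner_eq_wronskian_sq_mul (u x) (u' x) (v x) (v' x) a₁ b₁ c₁ a₁ b₁ c₁
      + (4 * (a₁ * c₁) - b₁ ^ 2) * (u x * v' x - u' x * v x + 1) * hW

theorem appell_inner_product_of_quadratic_forms (a : ℝ) (q : ℝ → ℝ)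
    (hq : ContinuousOn q (Set.Ici a)) (lam : ℝ)
    (u u' u'' v v' v'' : ℝ → ℝ)
    (hu' : ∀ x ∈ Set.Ici a, HasDerivWithinAt u (u' x) (Set.Ici a) x)
    (hu'' : ∀ x ∈ Set.Ici a, HasDerivWithinAt u' (u'' x) (Set.Ici a) x)
    (hv' : ∀ x ∈ Set.Ici a, HasDerivWithinAt v (v' x) (Set.Ici a) x)
    (hv'' : ∀ x ∈ Set.Ici a, HasDerivWithinAt v' (v'' x) (Set.Ici a) x)
    (hodeu : ∀ x ∈ Set.Ici a, -u'' x + q x * u x = lam * u x)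
    (hodev : ∀ x ∈ Set.Ici a, -v'' x + q x * v x = lam * v x)
    (hua : u a = 1) (hu'a : u' a = 0) (hva : v a = 0) (hv'a : v' a = 1)
    (a₁ b₁ c₁ a₂ b₂ c₂ : ℝ)
    (P₁ Q₁ R₁ P₂ Q₂ R₂ : ℝ → ℝ)
    (hP₁ : P₁ = fun x => a₁ * u' x ^ 2 + b₁ * (u' x * v' x) + c₁ * v' x ^ 2)
    (hQ₁ : Q₁ = fun x =>
      -2 * a₁ * (u x * u' x) - b₁ * (u' x * v x + u x * v' x) - 2 * c₁ * (v x * v' x))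
    (hR₁ : R₁ = fun x => a₁ * u x ^ 2 + b₁ * (u x * v x) + c₁ * v x ^ 2)
    (hP₂ : P₂ = fun x => a₂ * u' x ^ 2 + b₂ * (u' x * v' x) + c₂ * v' x ^ 2)
    (hQ₂ : Q₂ = fun x =>
      -2 * a₂ * (u x * u' x) - b₂ * (u' x * v x + u x * v' x) - 2 * c₂ * (v x * v' x))
    (hR₂ : R₂ = fun x => a₂ * u x ^ 2 + b₂ * (u x * v x) + c₂ * v x ^ 2) :
    ∀ x ∈ Set.Ici a,
      2 * (P₁ x * R₂ x + P₂ x * R₁ x) - Q₁ x * Q₂ x = 2 * (a₁ * c₂ + a₂ * c₁) - b₁ * b₂ ∧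
      4 * (P₁ x * R₁ x) - Q₁ x ^ 2 = 4 * (a₁ * c₁) - b₁ ^ 2 :=
  appell_inner_product_of_quadratic_forms_general a q lam u u' u'' v v' v'' hu' hu'' hv' hv'' hodeu
    hodev hua hu'a hva hv'a a₁ b₁ c₁ a₂ b₂ c₂ P₁ Q₁ R₁ P₂ Q₂ R₂ hP₁ hQ₁ hR₁ hP₂ hQ₂ hR₂
end

section
/- Let q : [a,∞) → ℝ be continuous, λ ∈ ℝ, and let u, v be the solutions of −y'' + q(x)y = λy with u(a)=1, u'(a)=0, v(a)=0, v'(a)=1. Let A ∈ ℝ and B > 0. Define r₀(x) := √((u(x)+Av(x))² + B²v(x)²) and θ₀(x) := ∫_a^x B/((u(t)+Av(t))² + B²v(t)²) dt. Then r₀(x) > 0 for all x ∈ [a,∞), θ₀ is strictly increasing with θ₀(a) = 0, and for all x ∈ [a,∞): u(x) + Av(x) = r₀(x)·cos(θ₀(x)) and B·v(x) = r₀(x)·sin(θ₀(x)). -/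
/-! The Wronskian `u v' - u' v` has derivative zero, so it is identically `1`; in particular
`w = u + (A + iB) v` never vanishes, and `Im (conj w * w') = B (u v' - u' v) = B`. Hence
`θ₀' = Im (conj w * w') / |w|²`, which is exactly the angular speed of the unit vector
`w / |w| = (c, s)`: `c' = -θ₀' s`, `s' = θ₀' c`. The pair `(cos θ₀, sin θ₀)` solves the same
rotation equation with the same value at `a`, and the squared distance between the two pairs
has derivative zero. -/

open Set Real MeasureTheory intervalIntegral
open Filter Topology

theorem eq_of_hasDerivWithinAt_Ici_zero {E : Type*} [NormedAddCommGroup E] [NormedSpace ℝ E]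
    {f : ℝ → E} {a : ℝ} (hf : ∀ x ∈ Ici a, HasDerivWithinAt f 0 (Ici a) x) :
    ∀ x ∈ Ici a, f x = f a := fun x hx =>
  constant_of_has_deriv_right_zero
    (fun y hy => (hf y hy.1).continuousWithinAt.mono Icc_subset_Ici_self)
    (fun y hy => (hf y hy.1).mono (Ici_subset_Ici.mpr hy.1)) x ⟨hx, le_rfl⟩

theorem hasDerivWithinAt_integral_Ici {E : Type*} [NormedAddCommGroup E] [NormedSpace ℝ E]
    [CompleteSpace E] {g : ℝ → E} {a x : ℝ} (hg : ContinuousOn g (Ici a)) (hx : x ∈ Ici a) :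
    HasDerivWithinAt (fun y => ∫ t in a..y, g t) (g x) (Ici a) x := by
  have hint : IntervalIntegrable g volume a x :=
    (hg.mono fun t ht => (le_min le_rfl hx).trans ht.1).intervalIntegrable
  have hmeas : ∀ l : Filter ℝ, Ici a ∈ l → StronglyMeasurableAtFilter g l :=
    fun l hl => ⟨Ici a, hl, hg.aestronglyMeasurable measurableSet_Ici⟩
  rcases (mem_Ici.mp hx).eq_or_lt with rfl | hax
  · exact integral_hasDerivWithinAt_right (t := Ioi a) hint
      (hmeas _ (mem_of_superset self_mem_nhdsWithin Ioi_subset_Ici_self))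
      ((hg a self_mem_Ici).mono Ioi_subset_Ici_self)
  · have hnhds : Ici a ∈ 𝓝 x := Ici_mem_nhds hax
    exact (integral_hasDerivAt_right hint (hmeas _ hnhds)
      (hg.continuousAt hnhds)).hasDerivWithinAt

theorem eq_cos_sin_of_hasDerivWithinAt {a : ℝ} {c s φ ω : ℝ → ℝ}
    (hc : ∀ x ∈ Ici a, HasDerivWithinAt c (-s x * ω x) (Ici a) x)
    (hs : ∀ x ∈ Ici a, HasDerivWithinAt s (c x * ω x) (Ici a) x)
    (hφ : ∀ x ∈ Ici a, HasDerivWithinAt φ (ω x) (Ici a) x)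
    (hca : c a = cos (φ a)) (hsa : s a = sin (φ a)) :
    ∀ x ∈ Ici a, c x = cos (φ x) ∧ s x = sin (φ x) := by
  set dist2 := fun x => (c x - cos (φ x)) ^ 2 + (s x - sin (φ x)) ^ 2
  have hderiv : ∀ x ∈ Ici a, HasDerivWithinAt dist2 0 (Ici a) x := fun x hx => by
    have hcos := (hasDerivAt_cos (φ x)).comp_hasDerivWithinAt x (hφ x hx)
    have hsin := (hasDerivAt_sin (φ x)).comp_hasDerivWithinAt x (hφ x hx)
    refine ((((hc x hx).sub hcos).pow 2).add (((hs x hx).sub hsin).pow 2)).congr_deriv ?_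
    simp only [Pi.sub_apply, Function.comp_apply]
    ring
  intro x hx
  have hzero : dist2 x = 0 := by
    rw [eq_of_hasDerivWithinAt_Ici_zero hderiv x hx]
    simp only [dist2, hca, hsa, sub_self]
    norm_num
  constructor <;> nlinarith [sq_nonneg (c x - cos (φ x)), sq_nonneg (s x - sin (φ x))]

theorem HasDerivWithinAt.div_sqrt_sq_add_sq {P S : ℝ → ℝ} {P' S' x : ℝ} {t : Set ℝ}
    (hP : HasDerivWithinAt P P' t x) (hS : HasDerivWithinAt S S' t x)
    (hpos : 0 < P x ^ 2 + S x ^ 2) :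
    HasDerivWithinAt (fun y => P y / √(P y ^ 2 + S y ^ 2))
      (-(S x / √(P x ^ 2 + S x ^ 2)) * ((P x * S' - S x * P') / (P x ^ 2 + S x ^ 2))) t x := by
  have hr := (hasDerivAt_sqrt hpos.ne').comp_hasDerivWithinAt x ((hP.pow 2).add (hS.pow 2))
  have hr0 : 0 < √(P x ^ 2 + S x ^ 2) := sqrt_pos.mpr hpos
  refine (hP.div hr hr0.ne').congr_deriv ?_
  simp only [Function.comp_apply, Pi.add_apply, Pi.pow_apply, Nat.cast_ofNat]
  field_simp
  rw [sq_sqrt hpos.le]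
  ring

theorem eq_sqrt_mul_cos_sin_of_hasDerivWithinAt {a : ℝ} {P P' S S' θ : ℝ → ℝ}
    (hP : ∀ x ∈ Ici a, HasDerivWithinAt P (P' x) (Ici a) x)
    (hS : ∀ x ∈ Ici a, HasDerivWithinAt S (S' x) (Ici a) x)
    (hpos : ∀ x ∈ Ici a, 0 < P x ^ 2 + S x ^ 2)
    (hθ : ∀ x ∈ Ici a, HasDerivWithinAt θ
      ((P x * S' x - S x * P' x) / (P x ^ 2 + S x ^ 2)) (Ici a) x)
    (hPa : P a = √(P a ^ 2 + S a ^ 2) * cos (θ a))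
    (hSa : S a = √(P a ^ 2 + S a ^ 2) * sin (θ a)) :
    ∀ x ∈ Ici a, P x = √(P x ^ 2 + S x ^ 2) * cos (θ x) ∧
      S x = √(P x ^ 2 + S x ^ 2) * sin (θ x) := by
  have hr0 : ∀ x ∈ Ici a, √(P x ^ 2 + S x ^ 2) ≠ 0 := fun x hx => (sqrt_pos.mpr (hpos x hx)).ne'
  -- the sine component is the cosine component of the rotated pair `(S, -P)`
  have hsin : ∀ x ∈ Ici a, HasDerivWithinAt (fun y => S y / √(P y ^ 2 + S y ^ 2))
      (P x / √(P x ^ 2 + S x ^ 2) * ((P x * S' x - S x * P' x) / (P x ^ 2 + S x ^ 2)))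
      (Ici a) x := fun x hx => by
    have h := (hS x hx).div_sqrt_sq_add_sq (hP x hx).neg
      (by rw [Pi.neg_apply, neg_sq, add_comm]; exact hpos x hx)
    simp only [Pi.neg_apply, neg_sq, add_comm (S _ ^ 2)] at h
    convert h using 1
    ring
  have hcs := eq_cos_sin_of_hasDerivWithinAt
    (fun x hx => (hP x hx).div_sqrt_sq_add_sq (hS x hx) (hpos x hx)) hsin hθ
    (by rw [div_eq_iff (hr0 a self_mem_Ici)]; linarith)
    (by rw [div_eq_iff (hr0 a self_mem_Ici)]; linarith)
  intro x hx
  obtain ⟨hcos, hsin⟩ := hcs x hx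
  rw [div_eq_iff (hr0 x hx)] at hcos hsin
  constructor <;> linarith

theorem wronskian_eq_of_ode {a lam : ℝ} {q u u' u'' v v' v'' : ℝ → ℝ}
    (hu' : ∀ x ∈ Ici a, HasDerivWithinAt u (u' x) (Ici a) x)
    (hu'' : ∀ x ∈ Ici a, HasDerivWithinAt u' (u'' x) (Ici a) x)
    (hv' : ∀ x ∈ Ici a, HasDerivWithinAt v (v' x) (Ici a) x)
    (hv'' : ∀ x ∈ Ici a, HasDerivWithinAt v' (v'' x) (Ici a) x)
    (hodeu : ∀ x ∈ Ici a, -u'' x + q x * u x = lam * u x)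
    (hodev : ∀ x ∈ Ici a, -v'' x + q x * v x = lam * v x) :
    ∀ x ∈ Ici a, u x * v' x - u' x * v x = u a * v' a - u' a * v a :=
  eq_of_hasDerivWithinAt_Ici_zero fun x hx => by
    refine (((hu' x hx).mul (hv'' x hx)).sub ((hu'' x hx).mul (hv' x hx))).congr_deriv ?_
    linear_combination v x * hodeu x hx - u x * hodev x hx

theorem sq_add_sq_pos_of_wronskian_ne_zero {u u' v v' A B : ℝ} (hB : B ≠ 0)
    (hW : u * v' - u' * v ≠ 0) : 0 < (u + A * v) ^ 2 + B ^ 2 * v ^ 2 := by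
  rcases eq_or_ne v 0 with rfl | hv
  · have hu : u ≠ 0 := by rintro rfl; simp at hW
    rw [mul_zero, add_zero, zero_pow two_ne_zero, mul_zero, add_zero]
    positivity
  · have : 0 < B ^ 2 * v ^ 2 := by positivity
    positivity

theorem prufer_polar_representation_general (a : ℝ) (q : ℝ → ℝ) (lam : ℝ)
    (u u' u'' v v' v'' : ℝ → ℝ)
    (hu' : ∀ x ∈ Set.Ici a, HasDerivWithinAt u (u' x) (Set.Ici a) x)
    (hu'' : ∀ x ∈ Set.Ici a, HasDerivWithinAt u' (u'' x) (Set.Ici a) x)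
    (hv' : ∀ x ∈ Set.Ici a, HasDerivWithinAt v (v' x) (Set.Ici a) x)
    (hv'' : ∀ x ∈ Set.Ici a, HasDerivWithinAt v' (v'' x) (Set.Ici a) x)
    (hodeu : ∀ x ∈ Set.Ici a, -u'' x + q x * u x = lam * u x)
    (hodev : ∀ x ∈ Set.Ici a, -v'' x + q x * v x = lam * v x)
    (hua : u a = 1) (hu'a : u' a = 0) (hva : v a = 0) (hv'a : v' a = 1)
    (A B : ℝ) (hB : 0 < B)
    (r₀ θ₀ : ℝ → ℝ)
    (hr₀ : r₀ = fun x => Real.sqrt ((u x + A * v x) ^ 2 + B ^ 2 * v x ^ 2))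
    (hθ₀ : θ₀ = fun x => ∫ t in a..x, B / ((u t + A * v t) ^ 2 + B ^ 2 * v t ^ 2)) :
    (∀ x ∈ Set.Ici a, 0 < r₀ x) ∧
    StrictMonoOn θ₀ (Set.Ici a) ∧ θ₀ a = 0 ∧
    (∀ x ∈ Set.Ici a,
      u x + A * v x = r₀ x * Real.cos (θ₀ x) ∧
      B * v x = r₀ x * Real.sin (θ₀ x)) := by
  have hW : ∀ x ∈ Ici a, u x * v' x - u' x * v x = 1 := fun x hx => by
    rw [wronskian_eq_of_ode hu' hu'' hv' hv'' hodeu hodev x hx, hua, hu'a, hva, hv'a]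
    ring
  have hpos : ∀ x ∈ Ici a, 0 < (u x + A * v x) ^ 2 + B ^ 2 * v x ^ 2 := fun x hx =>
    sq_add_sq_pos_of_wronskian_ne_zero hB.ne' (by rw [hW x hx]; exact one_ne_zero)
  have hθ' : ∀ x ∈ Ici a, HasDerivWithinAt θ₀
      (B / ((u x + A * v x) ^ 2 + B ^ 2 * v x ^ 2)) (Ici a) x := by
    have hu : ContinuousOn u (Ici a) := fun x hx => (hu' x hx).continuousWithinAt
    have hv : ContinuousOn v (Ici a) := fun x hx => (hv' x hx).continuousWithinAt
    have hcont : ContinuousOn (fun t => B / ((u t + A * v t) ^ 2 + B ^ 2 * v t ^ 2)) (Ici a) :=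
      continuousOn_const.div (by fun_prop) fun x hx => (hpos x hx).ne'
    exact hθ₀ ▸ fun x hx => hasDerivWithinAt_integral_Ici hcont hx
  have hθa : θ₀ a = 0 := by simp [hθ₀]
  have hmono : StrictMonoOn θ₀ (Ici a) :=
    strictMonoOn_of_hasDerivWithinAt_pos (convex_Ici a)
      (fun x hx => (hθ' x hx).continuousWithinAt)
      (fun x hx => (hθ' x (interior_subset hx)).mono interior_subset)
      (fun x hx => div_pos hB (hpos x (interior_subset hx)))
  have hangular : ∀ x ∈ Ici a,
      (u x + A * v x) * (B * v' x) - B * v x * (u' x + A * v' x) = B := fun x hx => by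
    linear_combination B * hW x hx
  have hpolar := eq_sqrt_mul_cos_sin_of_hasDerivWithinAt (P := fun x => u x + A * v x)
    (S := fun x => B * v x)
    (fun x hx => (hu' x hx).add ((hv' x hx).const_mul A)) (fun x hx => (hv' x hx).const_mul B)
    (by simpa only [mul_pow] using hpos)
    (fun x hx => (hθ' x hx).congr_deriv (by rw [mul_pow, hangular x hx]))
    (by simp [hua, hva, hθa]) (by simp [hva, hθa])
  subst hr₀
  simp only [mul_pow] at hpolar
  exact ⟨fun x hx => sqrt_pos.mpr (hpos x hx), hmono, hθa, hpolar⟩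

theorem prufer_polar_representation (a : ℝ) (q : ℝ → ℝ)
    (hq : ContinuousOn q (Set.Ici a)) (lam : ℝ)
    (u u' u'' v v' v'' : ℝ → ℝ)
    (hu' : ∀ x ∈ Set.Ici a, HasDerivWithinAt u (u' x) (Set.Ici a) x)
    (hu'' : ∀ x ∈ Set.Ici a, HasDerivWithinAt u' (u'' x) (Set.Ici a) x)
    (hv' : ∀ x ∈ Set.Ici a, HasDerivWithinAt v (v' x) (Set.Ici a) x)
    (hv'' : ∀ x ∈ Set.Ici a, HasDerivWithinAt v' (v'' x) (Set.Ici a) x)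
    (hodeu : ∀ x ∈ Set.Ici a, -u'' x + q x * u x = lam * u x)
    (hodev : ∀ x ∈ Set.Ici a, -v'' x + q x * v x = lam * v x)
    (hua : u a = 1) (hu'a : u' a = 0) (hva : v a = 0) (hv'a : v' a = 1)
    (A B : ℝ) (hB : 0 < B)
    (r₀ θ₀ : ℝ → ℝ)
    (hr₀ : r₀ = fun x => Real.sqrt ((u x + A * v x) ^ 2 + B ^ 2 * v x ^ 2))
    (hθ₀ : θ₀ = fun x => ∫ t in a..x, B / ((u t + A * v t) ^ 2 + B ^ 2 * v t ^ 2)) :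
    (∀ x ∈ Set.Ici a, 0 < r₀ x) ∧
    StrictMonoOn θ₀ (Set.Ici a) ∧ θ₀ a = 0 ∧
    (∀ x ∈ Set.Ici a,
      u x + A * v x = r₀ x * Real.cos (θ₀ x) ∧
      B * v x = r₀ x * Real.sin (θ₀ x)) :=
  prufer_polar_representation_general a q lam u u' u'' v v' v'' hu' hu'' hv' hv'' hodeu hodev hua
    hu'a hva hv'a A B hB r₀ θ₀ hr₀ hθ₀
end
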